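/- Let ê_{ij} = ⟨γᵢ, γⱼ⟩ where γ is the reflection map of the hypersurface R with intensity form κ_{ij}. Then ê_{ij} = κ_{ik} e^{kl} κ_{lj}; i.e., as matrices, ê = κ e^{-1} κ. -/

import Mathlib

/-!
Write `σ` for the reflection in the hyperplane `N(u)ᗮ`, so that `γ = σ x`. Since `σ` is an
isometry, `γ` is a unit vector, so every `γⱼ` lies in `γᗮ`; the vectors `σ xₖ` lie in `γᗮ` as well
and have Gram matrix `e`, so by counting dimensions they span it. Expanding `⟨γᵢ, γⱼ⟩` in this
frame gives `ê = Kᵀ e⁻¹ K` with `Kₖⱼ = ⟨σ xₖ, γⱼ⟩`.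

Since `rₖ ⊥ N`, the reflection fixes `rₖ = ρₖ x + ρ xₖ`, so `rₖ = ρₖ γ + ρ σ xₖ`, and pairing
with `γⱼ ⊥ γ` gives `K = -κ`. Finally `κ` is symmetric: `⟨γ, rₖ⟩ = ⟨x, rₖ⟩ = ρₖ`, and
differentiating gives `⟨rₖ, γⱼ⟩ = ∂ⱼ∂ₖρ - ⟨γ, ∂ⱼ∂ₖr⟩`, which is symmetric in `j, k`.
-/

open scoped RealInnerProductSpace

noncomputable def pd {n : ℕ} {F : Type*} [NormedAddCommGroup F] [NormedSpace ℝ F]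
    (f : (Fin n → ℝ) → F) (u : Fin n → ℝ) (i : Fin n) : F :=
  fderiv ℝ f u (Pi.single i 1)

open Matrix Submodule Filter Topology Set Module

section Calculus

variable {n : ℕ} {F : Type*} [NormedAddCommGroup F] [InnerProductSpace ℝ F]
  {f g : (Fin n → ℝ) → F} {u : Fin n → ℝ}

theorem pd_congr {f' : (Fin n → ℝ) → F} (h : f =ᶠ[𝓝 u] f') : pd f u = pd f' u := by
  funext i
  rw [pd, pd, h.fderiv_eq]

theorem pd_const (c : F) (i : Fin n) : pd (fun _ => c) u i = 0 := by
  simp [pd]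

theorem pd_smul {a : (Fin n → ℝ) → ℝ} (ha : DifferentiableAt ℝ a u)
    (hf : DifferentiableAt ℝ f u) (i : Fin n) :
    pd (fun v => a v • f v) u i = pd a u i • f u + a u • pd f u i := by
  rw [pd, fderiv_fun_smul ha hf]
  simp [pd, add_comm]

theorem pd_inner (hf : DifferentiableAt ℝ f u) (hg : DifferentiableAt ℝ g u) (i : Fin n) :
    pd (fun v => ⟪f v, g v⟫) u i = ⟪pd f u i, g u⟫ + ⟪f u, pd g u i⟫ := by
  rw [pd, fderiv_inner_apply ℝ hf hg, add_comm]
  rfl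

theorem differentiableAt_pd (hf : ContDiffAt ℝ 2 f u) (i : Fin n) :
    DifferentiableAt ℝ (fun v => pd f v i) u :=
  ((hf.fderiv_right (m := 1) le_rfl).differentiableAt one_ne_zero).clm_apply
    (differentiableAt_const _)

theorem pd_pd_comm (hf : ContDiffAt ℝ 2 f u) (i j : Fin n) :
    pd (fun v => pd f v i) u j = pd (fun v => pd f v j) u i := by
  have hD := (hf.fderiv_right (m := 1) le_rfl).differentiableAt one_ne_zero
  simp only [pd, fderiv_clm_apply hD (differentiableAt_const _), fderiv_fun_const,
    Pi.zero_apply, ContinuousLinearMap.comp_zero, zero_add, ContinuousLinearMap.flip_apply]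
  exact hf.isSymmSndFDerivAt (by simp) _ _

theorem inner_pd_self_eq_zero_of_norm_eq_one {ω : Set (Fin n → ℝ)} (hω : IsOpen ω)
    (hf : DifferentiableOn ℝ f ω) (h1 : ∀ v ∈ ω, ‖f v‖ = 1) :
    ∀ v ∈ ω, ∀ i, ⟪f v, pd f v i⟫ = 0 := by
  intro v hv i
  have hmem := hω.mem_nhds hv
  have hconst : (fun w => ⟪f w, f w⟫) =ᶠ[𝓝 v] fun _ => (1 : ℝ) :=
    eventually_of_mem hmem fun w hw => by simp [h1 w hw]
  have hfv := (hf v hv).differentiableAt hmem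
  have := pd_inner hfv hfv i
  rw [pd_congr hconst, pd_const, real_inner_comm] at this
  linarith

theorem pd_eq_of_eqOn_smul {ω : Set (Fin n → ℝ)} (hω : IsOpen ω) {a : (Fin n → ℝ) → ℝ}
    (ha : DifferentiableOn ℝ a ω) (hf : DifferentiableOn ℝ f ω)
    (hg : ∀ v ∈ ω, g v = a v • f v) :
    ∀ v ∈ ω, ∀ i, pd g v i = pd a v i • f v + a v • pd f v i := by
  intro v hv i
  have hmem := hω.mem_nhds hv
  rw [pd_congr (eventually_of_mem hmem hg),
    pd_smul ((ha v hv).differentiableAt hmem) ((hf v hv).differentiableAt hmem)]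

theorem inner_pd_pd_comm {φ : (Fin n → ℝ) → ℝ} (hφ : ContDiffAt ℝ 2 φ u)
    (hf : ContDiffAt ℝ 2 f u) (hg : DifferentiableAt ℝ g u)
    (hfg : ∀ k, ∀ᶠ v in 𝓝 u, ⟪g v, pd f v k⟫ = pd φ v k) (k j : Fin n) :
    ⟪pd f u k, pd g u j⟫ = ⟪pd f u j, pd g u k⟫ := by
  have hsecond : ∀ k j, ⟪pd f u k, pd g u j⟫
      = pd (fun v => pd φ v k) u j - ⟪g u, pd (fun v => pd f v k) u j⟫ := fun k j => by
    rw [← pd_congr (hfg k), pd_inner hg (differentiableAt_pd hf k), real_inner_comm]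
    ring
  rw [hsecond, hsecond, pd_pd_comm hφ, pd_pd_comm hf]

end Calculus

section LinearAlgebra

variable {F : Type*} [NormedAddCommGroup F] [InnerProductSpace ℝ F]

theorem inner_eq_dotProduct_inv_gram_mulVec {ι : Type*} [Fintype ι] [DecidableEq ι]
    {w : ι → F} (hw : IsUnit (gram ℝ w).det) (v : F) {v' : F}
    (hv' : v' ∈ span ℝ (range w)) :
    ⟪v, v'⟫ = (fun k => ⟪w k, v⟫) ⬝ᵥ (gram ℝ w)⁻¹ *ᵥ fun l => ⟪w l, v'⟫ := by
  obtain ⟨b, rfl⟩ := (mem_span_range_iff_exists_fun ℝ).mp hv'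
  have hcoord : (fun l => ⟪w l, ∑ k, b k • w k⟫) = gram ℝ w *ᵥ b := by
    ext l
    simp [mulVec, dotProduct, inner_sum, real_inner_smul_right, mul_comm]
  rw [hcoord, mulVec_mulVec, nonsing_inv_mul _ hw, one_mulVec]
  simp [dotProduct, inner_sum, real_inner_smul_right, real_inner_comm, mul_comm]

theorem mem_span_of_inner_eq_zero {n : ℕ} (hF : finrank ℝ F = n + 1) {w : Fin n → F}
    (hw : LinearIndependent ℝ w) {ν : F} (hν : ν ≠ 0) (hwν : ∀ k, ⟪ν, w k⟫ = 0)
    {v : F} (hv : ⟪ν, v⟫ = 0) : v ∈ span ℝ (range w) := by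
  have : Fact (finrank ℝ F = n + 1) := ⟨hF⟩
  have : FiniteDimensional ℝ F := .of_fact_finrank_eq_succ n
  have hle : span ℝ (range w) ≤ (ℝ ∙ ν)ᗮ := by
    rw [span_le]
    rintro _ ⟨k, rfl⟩
    exact mem_orthogonal_singleton_iff_inner_right.mpr (hwν k)
  have hrank : finrank ℝ (span ℝ (range w)) = finrank ℝ (ℝ ∙ ν)ᗮ := by
    rw [finrank_span_eq_card hw, Fintype.card_fin, finrank_orthogonal_span_singleton (n := n) hν]
  rw [eq_of_le_of_finrank_eq hle hrank]
  exact mem_orthogonal_singleton_iff_inner_right.mpr hv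

theorem gram_eq_transpose_mul_inv_gram_mul {n : ℕ} (hF : finrank ℝ F = n + 1)
    {W G : Fin n → F} (hW : IsUnit (gram ℝ W).det) {ν : F} (hν : ν ≠ 0)
    (hWν : ∀ k, ⟪ν, W k⟫ = 0) (hGν : ∀ j, ⟪ν, G j⟫ = 0) :
    gram ℝ G = (of fun k j => ⟪W k, G j⟫)ᵀ * (gram ℝ W)⁻¹ * of fun k j => ⟪W k, G j⟫ := by
  have hW' := linearIndependent_of_det_gram_ne_zero hW.ne_zero
  ext i j
  rw [gram_apply, mul_mul_apply, inner_eq_dotProduct_inv_gram_mulVec hW _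
    (mem_span_of_inner_eq_zero hF hW' hν hWν (hGν j))]
  rfl

theorem reflection_orthogonal_singleton_apply {N : F} (hN : ‖N‖ = 1) (v : F) :
    reflection (ℝ ∙ N)ᗮ v = v - (2 * ⟪v, N⟫) • N := by
  rw [reflection_orthogonal_apply, reflection_singleton_apply, hN, real_inner_comm]
  module

theorem inner_reflection_smul_add_smul {N x X : F} {a b : ℝ} (hx : ‖x‖ = 1)
    (hxX : ⟪x, X⟫ = 0) (hN : ⟪N, a • x + b • X⟫ = 0) :
    ⟪reflection (ℝ ∙ N)ᗮ x, a • x + b • X⟫ = a := by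
  rw [← reflection_mem_subspace_eq_self (mem_orthogonal_singleton_iff_inner_right.mpr hN),
    LinearIsometryEquiv.inner_map_map, inner_add_right, real_inner_smul_right,
    real_inner_smul_right, real_inner_self_eq_norm_sq, hx, hxX]
  ring

theorem inner_smul_add_smul_eq_mul_inner_reflection {N x X y : F} {a b : ℝ}
    (hN : ⟪N, a • x + b • X⟫ = 0) (hy : ⟪reflection (ℝ ∙ N)ᗮ x, y⟫ = 0) :
    ⟪a • x + b • X, y⟫ = b * ⟪reflection (ℝ ∙ N)ᗮ X, y⟫ := by
  rw [← reflection_mem_subspace_eq_self (mem_orthogonal_singleton_iff_inner_right.mpr hN),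
    map_add, map_smul, map_smul, inner_add_left, real_inner_smul_left, real_inner_smul_left, hy,
    mul_zero, zero_add]

end LinearAlgebra

theorem hat_e_eq_kappa_einv_kappa_general
    {n : ℕ}
    (ω : Set (Fin n → ℝ)) (hω : IsOpen ω)
    (x : (Fin n → ℝ) → EuclideanSpace ℝ (Fin (n + 1)))
    (ρ : (Fin n → ℝ) → ℝ)
    (r N γ : (Fin n → ℝ) → EuclideanSpace ℝ (Fin (n + 1)))
    (e κ : (Fin n → ℝ) → Matrix (Fin n) (Fin n) ℝ)
    (hx : ContDiffOn ℝ 2 x ω)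
    (hρ : ContDiffOn ℝ 2 ρ ω)
    (hρpos : ∀ u ∈ ω, 0 < ρ u)
    (hxunit : ∀ u ∈ ω, ‖x u‖ = 1)
    (hr : ∀ u ∈ ω, r u = ρ u • x u)
    (he : ∀ u ∈ ω, ∀ i j, e u i j = ⟪pd x u i, pd x u j⟫)
    (heinv : ∀ u ∈ ω, IsUnit (e u).det)
    (hNunit : ∀ u ∈ ω, ‖N u‖ = 1)
    (hNperp : ∀ u ∈ ω, ∀ i, ⟪N u, pd r u i⟫ = 0)
    (hNsmooth : ContDiffOn ℝ 1 N ω)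
    (hγ : ∀ u ∈ ω, γ u = x u - (2 * ⟪x u, N u⟫) • N u)
    (hκ : ∀ u ∈ ω, ∀ i j, κ u i j = -(⟪pd r u i, pd γ u j⟫ / ρ u)) :
    ∀ u ∈ ω,
      (Matrix.of fun i j => ⟪pd γ u i, pd γ u j⟫) = κ u * (e u)⁻¹ * κ u := by
  intro u hu
  have hmem := hω.mem_nhds hu
  have hxD := hx.differentiableOn two_ne_zero
  have hND := hNsmooth.differentiableOn one_ne_zero
  have hγσ : ∀ v ∈ ω, γ v = reflection (ℝ ∙ N v)ᗮ (x v) := fun v hv => by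
    rw [hγ v hv, reflection_orthogonal_singleton_apply (hNunit v hv)]
  have hγD : DifferentiableOn ℝ γ ω :=
    (hxD.sub (((hxD.inner ℝ hND).const_mul 2).smul hND)).congr hγ
  have hxx := inner_pd_self_eq_zero_of_norm_eq_one hω hxD hxunit
  have hγγ := inner_pd_self_eq_zero_of_norm_eq_one hω hγD fun v hv => by
    rw [hγσ v hv, LinearIsometryEquiv.norm_map, hxunit v hv]
  have hrk := pd_eq_of_eqOn_smul hω (hρ.differentiableOn two_ne_zero) hxD hr
  have hNr : ∀ v ∈ ω, ∀ k, ⟪N v, pd ρ v k • x v + ρ v • pd x v k⟫ = 0 := fun v hv k => by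
    rw [← hrk v hv k, hNperp v hv k]
  have hκσ : (of fun k j => ⟪reflection (ℝ ∙ N u)ᗮ (pd x u k), pd γ u j⟫) = -κ u := by
    ext k j
    have hγj : ⟪reflection (ℝ ∙ N u)ᗮ (x u), pd γ u j⟫ = 0 := hγσ u hu ▸ hγγ u hu j
    rw [of_apply, neg_apply, hκ u hu, hrk u hu k,
      inner_smul_add_smul_eq_mul_inner_reflection (hNr u hu k) hγj,
      mul_div_cancel_left₀ _ (hρpos u hu).ne', neg_neg]
  have hκsymm : (κ u).IsSymm := IsSymm.ext fun k j => by
    rw [hκ u hu, hκ u hu, inner_pd_pd_comm (hρ.contDiffAt hmem)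
      (((hρ.smul hx).congr hr).contDiffAt hmem) ((hγD u hu).differentiableAt hmem)
      fun k => eventually_of_mem hmem fun v hv => by
        rw [hγσ v hv, hrk v hv k]
        exact inner_reflection_smul_add_smul (hxunit v hv) (hxx v hv k) (hNr v hv k)]
  have hgram : gram ℝ (fun k => reflection (ℝ ∙ N u)ᗮ (pd x u k)) = e u := by
    ext k l
    rw [gram_apply, LinearIsometryEquiv.inner_map_map, he u hu]
  have hγu : γ u ≠ 0 := norm_ne_zero_iff.mp (by
    rw [hγσ u hu, LinearIsometryEquiv.norm_map, hxunit u hu]; exact one_ne_zero)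
  change gram ℝ (pd γ u) = _
  rw [gram_eq_transpose_mul_inv_gram_mul finrank_euclideanSpace_fin (hgram ▸ heinv u hu) hγu
    (fun k => by rw [hγσ u hu, LinearIsometryEquiv.inner_map_map, hxx u hu k]) (hγγ u hu),
    hgram, hκσ, transpose_neg, hκsymm.eq, neg_mul, mul_neg, neg_mul, neg_neg]

/-- With `ê_{ij} = ⟨γᵢ, γⱼ⟩` and intensity form
`κ_{ij} = -⟨rᵢ, γⱼ⟩/ρ`, one has `ê_{ij} = κ_{ik} e^{kl} κ_{lj}`; i.e., as
matrices, `ê = κ e⁻¹ κ`. -/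
theorem hat_e_eq_kappa_einv_kappa
    {n : ℕ}
    (ω : Set (Fin n → ℝ)) (hω : IsOpen ω)
    (x : (Fin n → ℝ) → EuclideanSpace ℝ (Fin (n + 1)))
    (ρ : (Fin n → ℝ) → ℝ)
    (r N γ : (Fin n → ℝ) → EuclideanSpace ℝ (Fin (n + 1)))
    (e g κ : (Fin n → ℝ) → Matrix (Fin n) (Fin n) ℝ)
    (hx : ContDiffOn ℝ 2 x ω)
    (hρ : ContDiffOn ℝ 2 ρ ω)
    (hρpos : ∀ u ∈ ω, 0 < ρ u)
    (hxunit : ∀ u ∈ ω, ‖x u‖ = 1)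
    (hr : ∀ u ∈ ω, r u = ρ u • x u)
    (he : ∀ u ∈ ω, ∀ i j, e u i j = ⟪pd x u i, pd x u j⟫)
    (heinv : ∀ u ∈ ω, IsUnit (e u).det)
    (hg : ∀ u ∈ ω, ∀ i j, g u i j = ⟪pd r u i, pd r u j⟫)
    (hginv : ∀ u ∈ ω, IsUnit (g u).det)
    (hNunit : ∀ u ∈ ω, ‖N u‖ = 1)
    (hNperp : ∀ u ∈ ω, ∀ i, ⟪N u, pd r u i⟫ = 0)
    (hNsmooth : ContDiffOn ℝ 1 N ω)
    (hγ : ∀ u ∈ ω, γ u = x u - (2 * ⟪x u, N u⟫) • N u)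
    (hκ : ∀ u ∈ ω, ∀ i j, κ u i j = -(⟪pd r u i, pd γ u j⟫ / ρ u)) :
    ∀ u ∈ ω,
      (Matrix.of fun i j => ⟪pd γ u i, pd γ u j⟫) = κ u * (e u)⁻¹ * κ u :=
  hat_e_eq_kappa_einv_kappa_general ω hω x ρ r N γ e κ hx hρ hρpos hxunit hr he heinv hNunit hNperp
    hNsmooth hγ hκ
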